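/- arXiv:2205.06005 — 5 statements merged into one kernel-verified Lean document; each statement's English description precedes it below -/
import Mathlib

section
/- Let p ≥ 2 and k ∈ ℕ, k ≥ 1. Define θ_k : ℝ → ℝ by θ_k(ζ) = |ζ|^p for |ζ| ≤ k, and θ_k(ζ) = k^{p-2}·[ (p(p-1)/2)·ζ² - p(p-2)·k·|ζ| + ((p-1)(p-2)/2)·k² ] for |ζ| > k. Then θ_k is C¹ on ℝ and for all ζ ∈ ℝ one has |ζ·θ_k'(ζ)| ≤ p·θ_k(ζ). -/
open Real

/-!
Inside `[-k, k]` the function is `|ζ|^p`, with derivative `p ζ |ζ|^(p-2)`; outside it is the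
quadratic in `|ζ|` matching value `k^p` and slope `p k^(p-1)` at `|ζ| = k`, so it is `C¹`. Inside,
`ζ θ'(ζ) = p θ(ζ)` exactly; outside, `ζ θ'(ζ) ≥ 0` and
`p θ(ζ) - ζ θ'(ζ) = p (p-1) (p-2) / 2 · k^(p-2) (|ζ| - k)^2 ≥ 0`.
-/

open Filter Topology Set

theorem HasDerivAt.ite_le {f g : ℝ → ℝ} {a d : ℝ} (hf : HasDerivAt f d a)
    (hg : HasDerivAt g d a) (hfg : f a = g a) :
    HasDerivAt (fun x => if x ≤ a then f x else g x) d a := by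
  have hleft : HasDerivWithinAt (fun x => if x ≤ a then f x else g x) d (Iic a) a :=
    hf.hasDerivWithinAt.congr (fun x hx => if_pos hx) (if_pos le_rfl)
  have hright : HasDerivWithinAt (fun x => if x ≤ a then f x else g x) d (Ici a) a := by
    refine hg.hasDerivWithinAt.congr (fun x hx => ?_) (by simp [hfg])
    split_ifs with hxa
    · rw [le_antisymm hxa hx, hfg]
    · rfl
  simpa [Iic_union_Ici, hasDerivWithinAt_univ] using hleft.union hright

theorem Function.Even.hasDerivAt_of_neg {f : ℝ → ℝ} (hf : f.Even) {x d : ℝ}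
    (h : HasDerivAt f d (-x)) : HasDerivAt f (-d) x := by
  have hcomp := h.comp x (hasDerivAt_neg x)
  rw [show f ∘ Neg.neg = f from funext hf] at hcomp
  simpa using hcomp

noncomputable section

def truncQuad (p K x : ℝ) : ℝ :=
  K ^ (p - 2) * (p * (p - 1) / 2 * x ^ 2 - p * (p - 2) * K * x + (p - 1) * (p - 2) / 2 * K ^ 2)

def truncPow (p K ζ : ℝ) : ℝ :=
  if |ζ| ≤ K then |ζ| ^ p else truncQuad p K |ζ|

/-- `max (-K) (min ζ K)` clamps `ζ` to `[-K, K]`: this single, visibly continuous formula is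
`p ζ |ζ|^(p-2)` on `[-K, K]` and `K^(p-2) (p (p-1) ζ - p (p-2) K sign ζ)` outside. -/
def truncPowDeriv (p K ζ : ℝ) : ℝ :=
  p * min |ζ| K ^ (p - 2) * ((p - 1) * ζ - (p - 2) * max (-K) (min ζ K))

end

variable {p K : ℝ}

theorem truncQuad_self (hK : 0 < K) : truncQuad p K K = K ^ p := by
  have hKp : K ^ (p - 2) * K ^ 2 = K ^ p := by
    rw [← rpow_natCast K 2, ← rpow_add hK]
    norm_num
  rw [truncQuad, ← hKp]
  ring

theorem hasDerivAt_truncQuad (x : ℝ) :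
    HasDerivAt (truncQuad p K) (K ^ (p - 2) * (p * (p - 1) * x - p * (p - 2) * K)) x := by
  have h := ((((hasDerivAt_pow 2 x).const_mul (p * (p - 1) / 2)).sub
    ((hasDerivAt_id' x).const_mul (p * (p - 2) * K))).add_const
      ((p - 1) * (p - 2) / 2 * K ^ 2)).const_mul (K ^ (p - 2))
  exact h.congr_deriv (by push_cast; ring)

theorem truncPow_even : (truncPow p K).Even := by
  intro ζ
  show truncPow p K (-ζ) = truncPow p K ζ
  rw [truncPow, truncPow, abs_neg]

theorem truncPowDeriv_odd (hK : 0 ≤ K) : (truncPowDeriv p K).Odd := fun ζ => by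
  have hclamp : max (-K) (min (-ζ) K) = -max (-K) (min ζ K) := by
    simp only [min_def, max_def]
    split_ifs <;> linarith
  simp only [truncPowDeriv, abs_neg, hclamp]
  ring

theorem truncPowDeriv_of_abs_le {ζ : ℝ} (h : |ζ| ≤ K) :
    truncPowDeriv p K ζ = p * |ζ| ^ (p - 2) * ζ := by
  obtain ⟨hlo, hhi⟩ := abs_le.mp h
  rw [truncPowDeriv, min_eq_left h, min_eq_left hhi, max_eq_right hlo]
  ring

theorem truncPowDeriv_of_le {ζ : ℝ} (hK : 0 ≤ K) (h : K ≤ ζ) :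
    truncPowDeriv p K ζ = K ^ (p - 2) * (p * (p - 1) * ζ - p * (p - 2) * K) := by
  rw [truncPowDeriv, abs_of_nonneg (hK.trans h), min_eq_right h,
    max_eq_right (by linarith)]
  ring

theorem continuous_truncPowDeriv (hp : 2 ≤ p) : Continuous (truncPowDeriv p K) := by
  unfold truncPowDeriv
  have := continuous_rpow_const (q := p - 2) (by linarith)
  fun_prop

theorem hasDerivAt_truncPow_of_abs_lt (hp : 1 < p) {ζ : ℝ} (h : |ζ| < K) :
    HasDerivAt (truncPow p K) (truncPowDeriv p K ζ) ζ := by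
  have hev : truncPow p K =ᶠ[𝓝 ζ] fun x => |x| ^ p := by
    filter_upwards [(isOpen_lt continuous_abs continuous_const).mem_nhds h] with x hx
    exact if_pos (le_of_lt hx)
  rw [truncPowDeriv_of_abs_le h.le]
  exact (hasDerivAt_abs_rpow ζ hp).congr_of_eventuallyEq hev

theorem hasDerivAt_truncPow_of_le (hp : 1 < p) (hK : 0 < K) {ζ : ℝ} (h : K ≤ ζ) :
    HasDerivAt (truncPow p K) (truncPowDeriv p K ζ) ζ := by
  have hev : truncPow p K =ᶠ[𝓝 ζ] fun x => if x ≤ K then |x| ^ p else truncQuad p K x := by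
    filter_upwards [Ioi_mem_nhds (hK.trans_le h)] with x hx
    simp only [truncPow, abs_of_pos (mem_Ioi.mp hx)]
  rw [truncPowDeriv_of_le hK.le h]
  refine HasDerivAt.congr_of_eventuallyEq ?_ hev
  rcases h.eq_or_lt with rfl | hlt
  · have hslope : K ^ (p - 2) * (p * (p - 1) * K - p * (p - 2) * K) = p * |K| ^ (p - 2) * K := by
      rw [abs_of_pos hK]
      ring
    rw [hslope]
    refine (hasDerivAt_abs_rpow K hp).ite_le ?_ (by rw [truncQuad_self hK, abs_of_pos hK])
    exact hslope ▸ hasDerivAt_truncQuad K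
  · refine (hasDerivAt_truncQuad ζ).congr_of_eventuallyEq ?_
    filter_upwards [Ioi_mem_nhds hlt] with x hx
    exact if_neg (not_le.mpr hx)

theorem hasDerivAt_truncPow (hp : 1 < p) (hK : 0 < K) (ζ : ℝ) :
    HasDerivAt (truncPow p K) (truncPowDeriv p K ζ) ζ := by
  rcases lt_or_ge |ζ| K with h | h
  · exact hasDerivAt_truncPow_of_abs_lt hp h
  rcases le_abs'.mp h with hneg | hpos
  · rw [← neg_neg (truncPowDeriv p K ζ), ← truncPowDeriv_odd hK.le]
    exact truncPow_even.hasDerivAt_of_neg (hasDerivAt_truncPow_of_le hp hK (le_neg.mpr hneg))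
  · exact hasDerivAt_truncPow_of_le hp hK hpos

theorem contDiff_one_truncPow (hp : 2 ≤ p) (hK : 0 < K) : ContDiff ℝ 1 (truncPow p K) := by
  have hderiv : ∀ ζ, HasDerivAt (truncPow p K) (truncPowDeriv p K ζ) ζ :=
    hasDerivAt_truncPow (by linarith) hK
  refine contDiff_one_iff_deriv.mpr ⟨fun ζ => (hderiv ζ).differentiableAt, ?_⟩
  rw [show deriv (truncPow p K) = truncPowDeriv p K from funext fun ζ => (hderiv ζ).deriv]
  exact continuous_truncPowDeriv hp

theorem mul_truncPowDeriv_of_abs_le (hp : 0 < p) {ζ : ℝ} (h : |ζ| ≤ K) :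
    ζ * truncPowDeriv p K ζ = p * truncPow p K ζ := by
  have hsplit : |ζ| ^ p = |ζ| ^ (p - 2) * |ζ| ^ 2 := by
    rw [← rpow_natCast, ← rpow_add' (abs_nonneg ζ) (by norm_num; linarith)]
    norm_num
  rw [truncPowDeriv_of_abs_le h, truncPow, if_pos h, hsplit, sq_abs]
  ring

theorem mul_truncPowDeriv_of_le_abs (hK : 0 ≤ K) {ζ : ℝ} (h : K ≤ |ζ|) :
    ζ * truncPowDeriv p K ζ = p * K ^ (p - 2) * |ζ| * ((p - 1) * |ζ| - (p - 2) * K) := by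
  have hpos : ∀ x, K ≤ x →
      x * truncPowDeriv p K x = p * K ^ (p - 2) * x * ((p - 1) * x - (p - 2) * K) := by
    intro x hx
    rw [truncPowDeriv_of_le hK hx]
    ring
  rcases le_abs'.mp h with hneg | hζ
  · rw [← neg_mul_neg, ← truncPowDeriv_odd hK, hpos _ (le_neg.mpr hneg),
      abs_of_nonpos (by linarith)]
  · rw [hpos _ hζ, abs_of_nonneg (hK.trans hζ)]

theorem sub_mul_truncPowDeriv_of_lt_abs (hK : 0 ≤ K) {ζ : ℝ} (h : K < |ζ|) :
    p * truncPow p K ζ - ζ * truncPowDeriv p K ζ =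
      p * (p - 1) * (p - 2) / 2 * K ^ (p - 2) * (|ζ| - K) ^ 2 := by
  rw [truncPow, if_neg h.not_ge, truncQuad, mul_truncPowDeriv_of_le_abs hK h.le]
  ring

theorem abs_mul_truncPowDeriv_le (hp : 2 ≤ p) (hK : 0 ≤ K) (ζ : ℝ) :
    |ζ * truncPowDeriv p K ζ| ≤ p * truncPow p K ζ := by
  rcases le_or_gt |ζ| K with h | h
  · rw [mul_truncPowDeriv_of_abs_le (by linarith) h, abs_of_nonneg]
    rw [truncPow, if_pos h]
    exact mul_nonneg (by linarith) (by positivity)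
  · have hKp : 0 ≤ K ^ (p - 2) := rpow_nonneg hK _
    have hnonneg : 0 ≤ ζ * truncPowDeriv p K ζ := by
      rw [mul_truncPowDeriv_of_le_abs hK h.le]
      exact mul_nonneg (mul_nonneg (mul_nonneg (by linarith) hKp) (abs_nonneg ζ)) (by nlinarith)
    have hgap : 0 ≤ p * (p - 1) * (p - 2) / 2 * K ^ (p - 2) * (|ζ| - K) ^ 2 := by
      have hcoef : 0 ≤ p * (p - 1) * (p - 2) / 2 :=
        div_nonneg (mul_nonneg (mul_nonneg (by linarith) (by linarith)) (by linarith)) zero_le_two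
      exact mul_nonneg (mul_nonneg hcoef hKp) (sq_nonneg _)
    rw [abs_of_nonneg hnonneg]
    linarith [sub_mul_truncPowDeriv_of_lt_abs (p := p) hK h]

theorem eq_truncPow {θ : ℝ → ℝ} (hθ₁ : ∀ ζ : ℝ, |ζ| ≤ K → θ ζ = |ζ| ^ p)
    (hθ₂ : ∀ ζ : ℝ, K < |ζ| → θ ζ = K ^ (p - 2) *
      (p * (p - 1) / 2 * ζ ^ 2 - p * (p - 2) * K * |ζ| + (p - 1) * (p - 2) / 2 * K ^ 2)) :
    θ = truncPow p K := by
  funext ζ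
  rcases le_or_gt |ζ| K with h | h
  · rw [hθ₁ ζ h, truncPow, if_pos h]
  · rw [hθ₂ ζ h, truncPow, if_neg h.not_ge, truncQuad, sq_abs]

/-- The quadratic-growth truncation `θ_k` of `ζ ↦ |ζ|^p` is `C¹` and satisfies
`|ζ θ_k'(ζ)| ≤ p θ_k(ζ)`. -/
theorem truncation_C1_and_first_deriv_bound (p : ℝ) (hp : 2 ≤ p) (k : ℕ) (hk : 1 ≤ k)
    (θ : ℝ → ℝ)
    (hθ₁ : ∀ ζ : ℝ, |ζ| ≤ (k : ℝ) → θ ζ = |ζ| ^ p)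
    (hθ₂ : ∀ ζ : ℝ, (k : ℝ) < |ζ| →
      θ ζ = (k : ℝ) ^ (p - 2) *
        (p * (p - 1) / 2 * ζ ^ 2 - p * (p - 2) * (k : ℝ) * |ζ|
          + (p - 1) * (p - 2) / 2 * (k : ℝ) ^ 2)) :
    ContDiff ℝ 1 θ ∧ ∀ ζ : ℝ, |ζ * deriv θ ζ| ≤ p * θ ζ := by
  have hK : (0 : ℝ) < k := by exact_mod_cast hk
  obtain rfl := eq_truncPow hθ₁ hθ₂
  refine ⟨contDiff_one_truncPow hp hK, fun ζ => ?_⟩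
  rw [(hasDerivAt_truncPow (by linarith) hK ζ).deriv]
  exact abs_mul_truncPowDeriv_le hp hK.le ζ
end

section
/- Let A : ℝ → ℝ be nondecreasing and differentiable, and let η : ℝ → ℝ be differentiable with nondecreasing derivative η' (i.e., η convex). Then for all real numbers a, b, k: η'(b - k)·(A(a) - A(b)) ≤ ∫_k^a η'(σ - k)·A'(σ) dσ - ∫_k^b η'(σ - k)·A'(σ) dσ. -/
/-!
The difference of the two integrals is the single oriented integral `∫_b^a η'(σ - k) A'(σ) dσ`,
and `A(a) - A(b) = ∫_b^a A'`. Since `A' ≥ 0` and the weight `σ ↦ η'(σ - k)` is monotone, on the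
interval between `b` and `a` the weight is at least `η'(b - k)` when `b ≤ a` and at most
`η'(b - k)` when `a ≤ b`; with the orientation of the integral this gives the same inequality
in both cases.
-/

open intervalIntegral MeasureTheory Set

theorem IntervalIntegrable.monotoneOn_mul {g w : ℝ → ℝ} {a b : ℝ}
    (hg : MonotoneOn g (uIcc a b)) (hw : IntervalIntegrable w volume a b) :
    IntervalIntegrable (fun x => g x * w x) volume a b := by
  rw [intervalIntegrable_iff] at hw ⊢
  refine hw.bdd_mul (c := max |g (a ⊓ b)| |g (a ⊔ b)|)
    (hg.intervalIntegrable.def'.aestronglyMeasurable) ?_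
  filter_upwards [ae_restrict_mem measurableSet_uIoc] with x hx
  have hx' : x ∈ uIcc a b := uIoc_subset_uIcc hx
  exact abs_le_max_abs_abs (hg ⟨le_rfl, inf_le_sup⟩ hx' hx'.1)
    (hg hx' ⟨inf_le_sup, le_rfl⟩ hx'.2)

theorem mul_integral_le_integral_mul_of_monotoneOn {g w : ℝ → ℝ} {a b : ℝ}
    (hg : MonotoneOn g (uIcc a b)) (hw₀ : ∀ x ∈ uIcc a b, 0 ≤ w x)
    (hw : IntervalIntegrable w volume a b) :
    g a * ∫ x in a..b, w x ≤ ∫ x in a..b, g x * w x := by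
  have hgw := hw.monotoneOn_mul hg
  rw [← intervalIntegral.integral_const_mul]
  rcases le_total a b with hab | hba
  · refine integral_mono_on hab (hw.const_mul _) hgw fun x hx => ?_
    have hx' : x ∈ uIcc a b := by rwa [uIcc_of_le hab]
    exact mul_le_mul_of_nonneg_right (hg left_mem_uIcc hx' hx.1) (hw₀ x hx')
  · rw [integral_symm b a, integral_symm b a, neg_le_neg_iff]
    refine integral_mono_on hba hgw.symm (hw.const_mul _).symm fun x hx => ?_
    have hx' : x ∈ uIcc a b := by rwa [uIcc_of_ge hba]
    exact mul_le_mul_of_nonneg_right (hg hx' left_mem_uIcc hx.2) (hw₀ x hx')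

theorem convex_weight_inequality_general (A η : ℝ → ℝ)
    (hA : Monotone A) (hA' : Differentiable ℝ A)
    (hη' : Monotone (deriv η)) (a b k : ℝ) :
    deriv η (b - k) * (A a - A b) ≤
      (∫ σ in k..a, deriv η (σ - k) * deriv A σ) -
      (∫ σ in k..b, deriv η (σ - k) * deriv A σ) := by
  have hweight : Monotone fun σ => deriv η (σ - k) := fun _ _ h => hη' (sub_le_sub_right h k)
  have hA'int (x y : ℝ) : IntervalIntegrable (deriv A) volume x y :=
    (hA.monotoneOn _).intervalIntegrable_deriv
  have hint (x y : ℝ) := (hA'int x y).monotoneOn_mul (hweight.monotoneOn _)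
  rw [integral_interval_sub_left (hint k a) (hint k b),
    ← integral_deriv_eq_sub (fun x _ => hA' x) (hA'int b a)]
  exact mul_integral_le_integral_mul_of_monotoneOn (hweight.monotoneOn _)
    (fun x _ => hA.deriv_nonneg) (hA'int b a)

/-- For `A` nondecreasing differentiable and `η` differentiable convex
(`η'` nondecreasing):
`η'(b-k)(A(a)-A(b)) ≤ ∫_k^a η'(σ-k) A'(σ) dσ - ∫_k^b η'(σ-k) A'(σ) dσ`. -/
theorem convex_weight_inequality (A η : ℝ → ℝ)
    (hA : Monotone A) (hA' : Differentiable ℝ A)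
    (hη : Differentiable ℝ η) (hη' : Monotone (deriv η)) (a b k : ℝ) :
    deriv η (b - k) * (A a - A b) ≤
      (∫ σ in k..a, deriv η (σ - k) * deriv A σ) -
      (∫ σ in k..b, deriv η (σ - k) * deriv A σ) :=
  convex_weight_inequality_general A η hA hA' hη' a b k
end

section
/- Let A : ℝ → ℝ be a nondecreasing C¹ function and let φ : ℝ → ℝ be C². Then for all real numbers a and b: φ'(b)·(A(a) - A(b)) = ∫_ℝ A'(ζ)·φ'(ζ)·(1_{ζ < a} - 1_{ζ < b}) dζ - ∫_ℝ φ''(ζ)·|A(a) - A(ζ)|·1_{(min(a,b), max(a,b))}(ζ) dζ. -/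
/-!
Integrate `φ' · (A a - A)` by parts from `b` to `a`: the boundary term at `a` vanishes, leaving
`φ'(b) (A a - A b) = ∫_b^a A' φ' - ∫_b^a φ'' (A a - A)`. The indicator integrals are these oriented
interval integrals; in the second one, monotonicity of `A` means the sign of `A a - A ζ` on the
interval between `a` and `b` is exactly the orientation sign of `∫_b^a`.
-/

open MeasureTheory Set

theorem integral_mul_indicator_lt_sub_indicator_lt {f : ℝ → ℝ} {a b : ℝ}
    (hf : IntervalIntegrable f volume b a) :
    ∫ ζ, f ζ * ({ζ : ℝ | ζ < a}.indicator (fun _ => (1 : ℝ)) ζ -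
      {ζ : ℝ | ζ < b}.indicator (fun _ => (1 : ℝ)) ζ) = ∫ ζ in b..a, f ζ := by
  have hae : (fun ζ => f ζ * ({ζ : ℝ | ζ < a}.indicator (fun _ => (1 : ℝ)) ζ -
      {ζ : ℝ | ζ < b}.indicator (fun _ => (1 : ℝ)) ζ)) =ᵐ[volume]
      fun ζ => (Ioc b a).indicator f ζ - (Ioc a b).indicator f ζ := by
    filter_upwards [volume.ae_ne a, volume.ae_ne b] with ζ hζa hζb
    simp only [indicator_apply, mem_ofPred_eq, mem_Ioc]
    split_ifs <;> grind
  rw [integral_congr_ae hae, integral_sub (hf.1.integrable_indicator measurableSet_Ioc)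
    (hf.2.integrable_indicator measurableSet_Ioc), integral_indicator measurableSet_Ioc,
    integral_indicator measurableSet_Ioc, intervalIntegral]

theorem integral_mul_abs_sub_mul_indicator_Ioo {A : ℝ → ℝ} (hA : Monotone A) (g : ℝ → ℝ)
    (a b : ℝ) :
    ∫ ζ, g ζ * |A a - A ζ| * (Ioo (min a b) (max a b)).indicator (fun _ => (1 : ℝ)) ζ =
      ∫ ζ in b..a, g ζ * (A a - A ζ) := by
  have hind : (fun ζ => g ζ * |A a - A ζ| *
      (Ioo (min a b) (max a b)).indicator (fun _ => (1 : ℝ)) ζ) =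
      (Ioo (min a b) (max a b)).indicator fun ζ => g ζ * |A a - A ζ| := by
    ext ζ
    simp only [indicator_apply]
    split_ifs <;> simp
  rw [hind, integral_indicator measurableSet_Ioo]
  rcases le_total b a with hba | hab
  · rw [min_eq_right hba, max_eq_left hba, intervalIntegral.integral_of_le hba,
      integral_Ioc_eq_integral_Ioo]
    refine setIntegral_congr_fun measurableSet_Ioo fun ζ hζ => ?_
    rw [abs_of_nonneg (sub_nonneg.2 (hA hζ.2.le))]
  · rw [min_eq_left hab, max_eq_right hab, intervalIntegral.integral_of_ge hab,
      integral_Ioc_eq_integral_Ioo, ← integral_neg]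
    refine setIntegral_congr_fun measurableSet_Ioo fun ζ hζ => ?_
    rw [abs_of_nonpos (sub_nonpos.2 (hA hζ.1.le)), mul_neg]

/-- Taylor identity: for `A` nondecreasing `C¹` and `φ` `C²`,
`φ'(b)(A(a)-A(b)) = ∫ A'(ζ)φ'(ζ)(1_{ζ<a} - 1_{ζ<b}) dζ
  - ∫ φ''(ζ)|A(a)-A(ζ)| 1_{(min a b, max a b)}(ζ) dζ`. -/
theorem taylor_identity (A φ : ℝ → ℝ)
    (hA : ContDiff ℝ 1 A) (hAmono : Monotone A) (hφ : ContDiff ℝ 2 φ)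
    (a b : ℝ) :
    deriv φ b * (A a - A b) =
      (∫ ζ : ℝ, deriv A ζ * deriv φ ζ *
          (Set.indicator {ζ : ℝ | ζ < a} (fun _ => (1 : ℝ)) ζ -
            Set.indicator {ζ : ℝ | ζ < b} (fun _ => (1 : ℝ)) ζ)) -
      ∫ ζ : ℝ, deriv (deriv φ) ζ * |A a - A ζ| *
          Set.indicator (Set.Ioo (min a b) (max a b)) (fun _ => (1 : ℝ)) ζ := by
  have hφ' : ContDiff ℝ 1 (deriv φ) := (contDiff_succ_iff_deriv (n := 1)).1 hφ |>.2.2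
  have hparts := intervalIntegral.integral_mul_deriv_eq_deriv_mul (a := b) (b := a)
    (u := deriv φ) (v := fun ζ => A a - A ζ) (u' := deriv (deriv φ)) (v' := fun ζ => -deriv A ζ)
    (fun ζ _ => (hφ'.differentiable one_ne_zero ζ).hasDerivAt)
    (fun ζ _ => ((hA.differentiable one_ne_zero ζ).hasDerivAt).const_sub (A a))
    ((hφ'.continuous_deriv le_rfl).intervalIntegrable b a)
    ((hA.continuous_deriv le_rfl).neg.intervalIntegrable b a)
  rw [integral_mul_indicator_lt_sub_indicator_lt (f := fun ζ => deriv A ζ * deriv φ ζ)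
      (((hA.continuous_deriv le_rfl).mul hφ'.continuous).intervalIntegrable b a),
    integral_mul_abs_sub_mul_indicator_Ioo hAmono]
  simp only [sub_self, mul_zero, mul_neg, intervalIntegral.integral_neg] at hparts
  rw [intervalIntegral.integral_congr (fun ζ _ => mul_comm (deriv A ζ) (deriv φ ζ))]
  linarith
end

section
/- Let T > 0, M ≥ 0, and let (h_n)_{n ≥ 0} be a sequence of nonnegative continuous functions on [0,T] such that h_0(t) ≤ M for all t, h_n(0) → 0 as n → ∞, and h_n(t) ≤ (1/2)·∫_0^t h_{n-1}(s) ds + h_{n-1}(0) for all n ≥ 1, t ∈ [0,T]. Then sup_{t ∈ [0,T]} h_n(t) → 0 as n → ∞. -/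
/-!
Weight by `exp (-t)` (a Bielecki norm): if `h n ≤ v n * exp` on `[0, T]`, then
`(1/2) ∫₀ᵗ h n ≤ (v n / 2) * (exp t - 1)`, so `h (n + 1) ≤ (v n / 2 + h n 0) * exp`.
The weights thus obey `v (n + 1) = v n / 2 + h n 0`, a contraction driven by a vanishing
forcing term, hence `v n → 0` and `sup h n ≤ v n * exp T → 0`.
-/

open MeasureTheory Filter intervalIntegral Set Real Topology

theorem le_pow_mul_of_le_mul {w : ℕ → ℝ} {c : ℝ} (hc : 0 ≤ c) {N : ℕ}
    (hw : ∀ n ≥ N, w (n + 1) ≤ c * w n) {n : ℕ} (hn : N ≤ n) :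
    w n ≤ c ^ (n - N) * w N := by
  induction n, hn using Nat.le_induction with
  | base => simp
  | succ n hn ih =>
    calc w (n + 1) ≤ c * w n := hw n hn
      _ ≤ c * (c ^ (n - N) * w N) := mul_le_mul_of_nonneg_left ih hc
      _ = c ^ (n + 1 - N) * w N := by rw [Nat.sub_add_comm hn, pow_succ]; ring

theorem tendsto_zero_of_le_mul_add {u b : ℕ → ℝ} {c : ℝ} (hc₀ : 0 ≤ c) (hc₁ : c < 1)
    (hu₀ : ∀ n, 0 ≤ u n) (hu : ∀ n, u (n + 1) ≤ c * u n + b n)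
    (hb : Tendsto b atTop (𝓝 0)) : Tendsto u atTop (𝓝 0) := by
  refine tendsto_order.2 ⟨fun a ha => Eventually.of_forall fun n => ha.trans_le (hu₀ n),
    fun ε hε => ?_⟩
  obtain ⟨N, hN⟩ := eventually_atTop.1 (hb.eventually (gt_mem_nhds
    (show (0 : ℝ) < (1 - c) * (ε / 2) by nlinarith)))
  have hcontract : ∀ n ≥ N, u (n + 1) - ε / 2 ≤ c * (u n - ε / 2) := fun n hn => by
    linarith [hu n, hN n hn]
  have hgeom : Tendsto (fun n => c ^ (n - N) * (u N - ε / 2)) atTop (𝓝 0) := by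
    simpa using ((tendsto_pow_atTop_nhds_zero_of_lt_one hc₀ hc₁).comp
      (tendsto_sub_atTop_nat N)).mul_const (u N - ε / 2)
  filter_upwards [eventually_ge_atTop N, hgeom.eventually (gt_mem_nhds (half_pos hε))]
    with n hn hsmall
  linarith [le_pow_mul_of_le_mul (w := fun n => u n - ε / 2) hc₀ hcontract hn]

theorem integral_le_mul_exp_sub_one {f : ℝ → ℝ} {v t : ℝ} (ht : 0 ≤ t)
    (hf₀ : ∀ s ∈ Ioc 0 t, 0 ≤ f s) (hf : ∀ s ∈ Ioc 0 t, f s ≤ v * exp s) :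
    ∫ s in (0 : ℝ)..t, f s ≤ v * (exp t - 1) := by
  calc ∫ s in (0 : ℝ)..t, f s ≤ ∫ s in (0 : ℝ)..t, v * exp s := by
        rw [integral_of_le ht, integral_of_le ht]
        exact setIntegral_mono_of_nonneg hf₀ hf
          ((continuous_const.mul continuous_exp).integrableOn_Ioc)
    _ = v * (exp t - 1) := by rw [intervalIntegral.integral_const_mul, integral_exp, exp_zero]

noncomputable def halvingMajorant (M : ℝ) (a : ℕ → ℝ) : ℕ → ℝ
  | 0 => M
  | n + 1 => halvingMajorant M a n / 2 + a n

theorem le_halvingMajorant_mul_exp {T M : ℝ} {h : ℕ → ℝ → ℝ} (hT : 0 ≤ T)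
    (hnonneg : ∀ n, ∀ t ∈ Icc 0 T, 0 ≤ h n t) (hM : ∀ t ∈ Icc 0 T, h 0 t ≤ M)
    (hrec : ∀ n, ∀ t ∈ Icc 0 T, h (n + 1) t ≤ 1 / 2 * (∫ s in (0 : ℝ)..t, h n s) + h n 0)
    (n : ℕ) : ∀ t ∈ Icc 0 T, h n t ≤ halvingMajorant M (fun k => h k 0) n * exp t := by
  induction n with
  | zero => exact fun t ht => (hM t ht).trans (le_mul_of_one_le_right
      ((hnonneg 0 t ht).trans (hM t ht)) (one_le_exp ht.1))
  | succ n ih =>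
    intro t ht
    set v := halvingMajorant M (fun k => h k 0) n
    have h₀ : 0 ∈ Icc 0 T := ⟨le_rfl, hT⟩
    have ha : 0 ≤ h n 0 := hnonneg n 0 h₀
    have hv : 0 ≤ v := ha.trans (by simpa using ih 0 h₀)
    have hint : ∫ s in (0 : ℝ)..t, h n s ≤ v * (exp t - 1) :=
      integral_le_mul_exp_sub_one ht.1
        (fun s hs => hnonneg n s ⟨hs.1.le, hs.2.trans ht.2⟩)
        (fun s hs => ih s ⟨hs.1.le, hs.2.trans ht.2⟩)
    have hexp : 1 ≤ exp t := one_le_exp ht.1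
    calc h (n + 1) t ≤ 1 / 2 * (∫ s in (0 : ℝ)..t, h n s) + h n 0 := hrec n t ht
      _ ≤ 1 / 2 * (v * (exp t - 1)) + h n 0 := by gcongr
      _ ≤ (v / 2 + h n 0) * exp t := by nlinarith [mul_le_mul_of_nonneg_left hexp ha]

theorem sup_tendsto_zero_of_iteration_general
    (T M : ℝ) (hT : 0 < T) (h : ℕ → ℝ → ℝ)
    (hnonneg : ∀ n, ∀ t ∈ Set.Icc (0 : ℝ) T, 0 ≤ h n t)
    (hM : ∀ t ∈ Set.Icc (0 : ℝ) T, h 0 t ≤ M)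
    (h0 : Tendsto (fun n => h n 0) atTop (nhds 0))
    (hrec : ∀ n : ℕ, 1 ≤ n → ∀ t ∈ Set.Icc (0 : ℝ) T,
      h n t ≤ (1 / 2) * (∫ s in (0:ℝ)..t, h (n - 1) s) + h (n - 1) 0) :
    Tendsto (fun n => ⨆ t : Set.Icc (0 : ℝ) T, h n t) atTop (nhds 0) := by
  set v := halvingMajorant M (fun k => h k 0)
  have hbound : ∀ n, ∀ t ∈ Icc 0 T, h n t ≤ v n * exp t :=
    le_halvingMajorant_mul_exp hT.le hnonneg hM fun n t ht => by
      simpa using hrec (n + 1) n.succ_pos t ht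
  have hv₀ : ∀ n, 0 ≤ v n := fun n =>
    (hnonneg n 0 ⟨le_rfl, hT.le⟩).trans (by simpa using hbound n 0 ⟨le_rfl, hT.le⟩)
  have hv : Tendsto v atTop (𝓝 0) :=
    tendsto_zero_of_le_mul_add (c := 1 / 2) (by norm_num) (by norm_num) hv₀
      (fun n => by simp only [v, halvingMajorant]; linarith) h0
  refine squeeze_zero (g := fun n => v n * exp T) (fun n => Real.iSup_nonneg fun t => hnonneg n t t.2)
    (fun n => Real.iSup_le (fun t => (hbound n t t.2).trans ?_) (by positivity [hv₀ n]))
    (by simpa using hv.mul_const (exp T))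
  exact mul_le_mul_of_nonneg_left (exp_le_exp.2 t.2.2) (hv₀ n)

/-- Gronwall-type iteration: if `h_n(t) ≤ (1/2)∫_0^t h_{n-1} + h_{n-1}(0)`, `h_0 ≤ M`
on `[0,T]` and `h_n(0) → 0`, then `sup_{[0,T]} h_n → 0`. -/
theorem sup_tendsto_zero_of_iteration
    (T M : ℝ) (hT : 0 < T) (h : ℕ → ℝ → ℝ)
    (hcont : ∀ n, ContinuousOn (h n) (Set.Icc 0 T))
    (hnonneg : ∀ n, ∀ t ∈ Set.Icc (0 : ℝ) T, 0 ≤ h n t)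
    (hM : ∀ t ∈ Set.Icc (0 : ℝ) T, h 0 t ≤ M)
    (h0 : Tendsto (fun n => h n 0) atTop (nhds 0))
    (hrec : ∀ n : ℕ, 1 ≤ n → ∀ t ∈ Set.Icc (0 : ℝ) T,
      h n t ≤ (1 / 2) * (∫ s in (0:ℝ)..t, h (n - 1) s) + h (n - 1) 0) :
    Tendsto (fun n => ⨆ t : Set.Icc (0 : ℝ) T, h n t) atTop (nhds 0) :=
  sup_tendsto_zero_of_iteration_general T M hT h hnonneg hM h0 hrec
end

section
/- Let f : X × ℝ → [0,1] be such that for each x ∈ X, ζ ↦ f(x, ζ) is nonincreasing, right-continuous, with limit 1 as ζ → −∞ and limit 0 as ζ → +∞ (a kinetic function pointwise in x). If for some x the function ζ ↦ f(x,ζ)·(1 − f(x,ζ)) is zero for Lebesgue-almost every ζ ∈ ℝ, then there exists u ∈ ℝ such that f(x, ζ) = 1_{u > ζ} for almost every ζ ∈ ℝ; moreover u = ∫_ℝ (f(x,ζ) − 1_{0 > ζ}) dζ. -/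
open MeasureTheory Filter Set

/-! An antitone `{0,1}`-valued (a.e.) function with limits `1` at `-∞` and `0` at `+∞` jumps from `1`
to `0` at the point `u` where it crosses the level `1/2`, so it is `1_{(-∞,u)}` off the null set
`{u}`; integrating `1_{(-∞,u)} - 1_{(-∞,0)}` then gives `u`. -/

theorem integral_indicator_Iio_sub_indicator_Iio (u v : ℝ) :
    ∫ ζ, ((Iio u).indicator 1 ζ - (Iio v).indicator 1 ζ : ℝ) = u - v := by
  wlog hvu : v ≤ u generalizing u v
  · calc ∫ ζ, ((Iio u).indicator 1 ζ - (Iio v).indicator 1 ζ : ℝ)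
        _ = -∫ ζ, ((Iio v).indicator 1 ζ - (Iio u).indicator 1 ζ : ℝ) := by
          rw [← integral_neg]; simp only [neg_sub]
        _ = u - v := by rw [this v u (le_of_not_ge hvu), neg_sub]
  have hdiff : Iio u \ Iio v = Ico v u := by ext; simp
  change ∫ ζ, ((Iio u).indicator 1 - (Iio v).indicator 1 : ℝ → ℝ) ζ = _
  rw [← indicator_sdiff (Iio_subset_Iio hvu), hdiff,
    integral_indicator_one measurableSet_Ico, Real.volume_real_Ico_of_le hvu]

theorem Antitone.exists_forall_lt_le_and_forall_gt_lt {g : ℝ → ℝ} (hg : Antitone g) {c : ℝ}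
    (hle : ∃ ζ, c ≤ g ζ) (hlt : ∃ ζ, g ζ < c) :
    ∃ u, (∀ ζ < u, c ≤ g ζ) ∧ ∀ ζ > u, g ζ < c := by
  obtain ⟨a, ha⟩ := hlt
  have hbdd : BddAbove {ζ | c ≤ g ζ} :=
    ⟨a, fun ζ hζ => le_of_not_gt fun haζ => (hg haζ.le).not_gt (ha.trans_le hζ)⟩
  refine ⟨sSup {ζ | c ≤ g ζ}, fun ζ hζ => ?_, fun ζ hζ => ?_⟩
  · obtain ⟨s, hs, hζs⟩ := exists_lt_of_lt_csSup hle hζ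
    exact le_trans hs (hg hζs.le)
  · exact lt_of_not_ge fun h => (le_csSup hbdd h).not_gt hζ

theorem Antitone.ae_eq_indicator_Iio {g : ℝ → ℝ} (hg : Antitone g)
    (hbot : Tendsto g atBot (nhds 1)) (htop : Tendsto g atTop (nhds 0))
    (h01 : ∀ᵐ ζ, g ζ * (1 - g ζ) = 0) :
    ∃ u, g =ᵐ[volume] (Iio u).indicator 1 := by
  obtain ⟨u, hleft, hright⟩ := hg.exists_forall_lt_le_and_forall_gt_lt (c := 1 / 2)
    ((hbot.eventually (lt_mem_nhds (by norm_num))).exists.imp fun _ => le_of_lt)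
    (htop.eventually (gt_mem_nhds (by norm_num))).exists
  refine ⟨u, ?_⟩
  filter_upwards [h01, compl_mem_ae_iff.mpr (measure_singleton u)] with ζ hζ hζu
  rcases lt_or_gt_of_ne (show ζ ≠ u from hζu) with hζ' | hζ'
  · have hhalf := hleft ζ hζ'
    rw [indicator_of_mem (mem_Iio.mpr hζ'), Pi.one_apply]
    rcases mul_eq_zero.mp hζ with h | h <;> linarith
  · have hhalf := hright ζ hζ'
    rw [indicator_of_notMem (notMem_Iio.mpr hζ'.le)]
    rcases mul_eq_zero.mp hζ with h | h <;> linarith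

theorem kinetic_function_equilibrium_general {X : Type*} (f : X × ℝ → ℝ)
    (hanti : ∀ x : X, Antitone (fun ζ => f (x, ζ)))
    (hbot : ∀ x : X, Tendsto (fun ζ => f (x, ζ)) atBot (nhds 1))
    (htop : ∀ x : X, Tendsto (fun ζ => f (x, ζ)) atTop (nhds 0))
    (x : X)
    (hx : ∀ᵐ ζ : ℝ, f (x, ζ) * (1 - f (x, ζ)) = 0) :
    ∃ u : ℝ,
      (∀ᵐ ζ : ℝ, f (x, ζ) = Set.indicator {ζ' : ℝ | ζ' < u} (fun _ => (1 : ℝ)) ζ) ∧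
      u = ∫ ζ : ℝ, (f (x, ζ) - Set.indicator {ζ' : ℝ | ζ' < 0} (fun _ => (1 : ℝ)) ζ) := by
  obtain ⟨u, hu⟩ := (hanti x).ae_eq_indicator_Iio (hbot x) (htop x) hx
  refine ⟨u, hu, ?_⟩
  calc u = ∫ ζ, ((Iio u).indicator 1 ζ - (Iio 0).indicator 1 ζ : ℝ) := by
        rw [integral_indicator_Iio_sub_indicator_Iio, sub_zero]
    _ = _ := integral_congr_ae <| by filter_upwards [hu] with ζ hζ; rw [hζ]; rfl

/-- A kinetic function which takes values in `{0,1}` a.e. is an equilibrium: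
there is `u` with `f(x,·) = 1_{u > ·}` a.e., and `u = ∫ (f(x,ζ) - 1_{0>ζ}) dζ`. -/
theorem kinetic_function_equilibrium {X : Type*} (f : X × ℝ → ℝ)
    (hrange : ∀ x ζ, 0 ≤ f (x, ζ) ∧ f (x, ζ) ≤ 1)
    (hanti : ∀ x : X, Antitone (fun ζ => f (x, ζ)))
    (hrc : ∀ (x : X) (ζ : ℝ), ContinuousWithinAt (fun ζ' => f (x, ζ')) (Set.Ici ζ) ζ)
    (hbot : ∀ x : X, Tendsto (fun ζ => f (x, ζ)) atBot (nhds 1))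
    (htop : ∀ x : X, Tendsto (fun ζ => f (x, ζ)) atTop (nhds 0))
    (x : X)
    (hx : ∀ᵐ ζ : ℝ, f (x, ζ) * (1 - f (x, ζ)) = 0) :
    ∃ u : ℝ,
      (∀ᵐ ζ : ℝ, f (x, ζ) = Set.indicator {ζ' : ℝ | ζ' < u} (fun _ => (1 : ℝ)) ζ) ∧
      u = ∫ ζ : ℝ, (f (x, ζ) - Set.indicator {ζ' : ℝ | ζ' < 0} (fun _ => (1 : ℝ)) ζ) :=
  kinetic_function_equilibrium_general f hanti hbot htop x hx
end
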